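/- arXiv:2002.03250 — 6 statements merged into one kernel-verified Lean document; each statement's English description precedes it below -/
import Mathlib

section
/- The integral of e^{-x} ln(x) over (0, ∞) equals −γ, the Euler–Mascheroni constant. -/
open MeasureTheory Real

theorem integral_exp_neg_mul_log :
    ∫ x in Set.Ioi (0 : ℝ), Real.exp (-x) * Real.log x
      = -Real.eulerMascheroniConstant := by
  have h1 := Complex.hasDerivAt_GammaIntegral (s := 1) (by norm_num)
  have heq : Complex.GammaIntegral =ᶠ[nhds 1] Complex.Gamma := by
    filter_upwards [IsOpen.mem_nhds (isOpen_lt continuous_const Complex.continuous_re)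
      (show (0:ℂ).re < (1:ℂ).re by norm_num)] with s hs
    exact (Complex.Gamma_eq_integral hs).symm
  have h2 : HasDerivAt Complex.GammaIntegral (-(Real.eulerMascheroniConstant : ℂ)) 1 :=
    Complex.hasDerivAt_Gamma_one.congr_of_eventuallyEq heq
  have h3 := h1.unique h2
  simp only [sub_self, Complex.cpow_zero, one_mul] at h3
  simp only [← Complex.ofReal_mul] at h3
  have hc : ∀ r : ℝ, Complex.ofReal r = @RCLike.ofReal ℂ _ r := fun r => rfl
  simp only [hc] at h3
  rw [_root_.integral_ofReal] at h3
  rw [show ∫ x in Set.Ioi (0:ℝ), Real.exp (-x) * Real.log x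
      = ∫ t in Set.Ioi (0:ℝ), Real.log t * Real.exp (-t) by
    congr 1; ext t; ring]
  exact_mod_cast h3
end

section
/- For every natural number k ≥ 1, ∫_0^1 (ln x)^k / (1 + x) dx = (−1)^k · k! · (2^k − 1)/2^k · ζ(k+1). -/
/-!
Substituting `x = exp (-t)` turns `∫₀¹ xⁿ (-log x)ᵏ dx` into the Gamma integral `k! / (n+1)^(k+1)`.
Expanding `1 / (1 + x) = ∑ (-x)ⁿ` and integrating termwise, which is legitimate because
`∑ k! / (n+1)^(k+1)` converges for `k ≥ 1`, gives `(-1)ᵏ k! η(k+1)`; splitting the alternating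
series into even and odd terms gives `η(s) = (1 - 2^(1-s)) ζ(s)`.
-/

open MeasureTheory Real

theorem integral_Ioi_pow_mul_exp_neg_mul (k : ℕ) {c : ℝ} (hc : 0 < c) :
    ∫ t in Set.Ioi 0, t ^ k * exp (-(c * t)) = k.factorial / c ^ (k + 1) := by
  have h := integral_rpow_mul_exp_neg_mul_Ioi (a := k + 1) (by positivity) hc
  simp only [add_sub_cancel_right, rpow_natCast, Gamma_nat_eq_factorial] at h
  rw [h, ← Nat.cast_succ, rpow_natCast, one_div, inv_pow, div_eq_mul_inv, mul_comm]

theorem integrableOn_Ioi_pow_mul_exp_neg_mul (k : ℕ) {c : ℝ} (hc : 0 < c) :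
    IntegrableOn (fun t => t ^ k * exp (-(c * t))) (Set.Ioi 0) :=
  .of_integral_ne_zero <| by rw [integral_Ioi_pow_mul_exp_neg_mul k hc]; positivity

theorem image_exp_neg_Ioi : (fun t => exp (-t)) '' Set.Ioi 0 = Set.Ioo 0 1 := by
  ext x
  constructor
  · rintro ⟨t, ht, rfl⟩
    exact ⟨exp_pos _, exp_lt_one_iff.mpr (neg_lt_zero.mpr ht)⟩
  · rintro ⟨hx0, hx1⟩
    exact ⟨-log x, neg_pos.mpr (log_neg hx0 hx1), by simp [exp_log hx0]⟩

theorem hasDerivWithinAt_exp_neg (s : Set ℝ) (t : ℝ) :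
    HasDerivWithinAt (fun t => exp (-t)) (-exp (-t)) s t := by
  simpa using ((hasDerivAt_neg t).exp).hasDerivWithinAt

theorem injOn_exp_neg (s : Set ℝ) : Set.InjOn (fun t => exp (-t)) s :=
  fun _ _ _ _ h => neg_injective (exp_injective h)

section ExpNegSubstitution

variable {E : Type*} [NormedAddCommGroup E] [NormedSpace ℝ E]

theorem integrableOn_Ioo_zero_one_iff_exp_neg (f : ℝ → E) :
    IntegrableOn f (Set.Ioo 0 1) ↔
      IntegrableOn (fun t => exp (-t) • f (exp (-t))) (Set.Ioi 0) := by
  rw [← image_exp_neg_Ioi, integrableOn_image_iff_integrableOn_abs_deriv_smul measurableSet_Ioi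
    (fun t _ => hasDerivWithinAt_exp_neg _ t) (injOn_exp_neg _)]
  simp only [abs_neg, abs_of_pos (exp_pos _)]

theorem integral_Ioo_zero_one_eq_integral_Ioi_exp_neg (f : ℝ → E) :
    ∫ x in Set.Ioo 0 1, f x = ∫ t in Set.Ioi 0, exp (-t) • f (exp (-t)) := by
  rw [← image_exp_neg_Ioi, integral_image_eq_integral_abs_deriv_smul measurableSet_Ioi
    (fun t _ => hasDerivWithinAt_exp_neg _ t) (injOn_exp_neg _)]
  simp only [abs_neg, abs_of_pos (exp_pos _)]

end ExpNegSubstitution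

theorem exp_neg_smul_pow_mul_neg_log_pow_exp_neg (n k : ℕ) (t : ℝ) :
    exp (-t) • (exp (-t) ^ n * (-log (exp (-t))) ^ k) = t ^ k * exp (-((n + 1) * t)) := by
  rw [log_exp, neg_neg, smul_eq_mul, ← exp_nat_mul, ← mul_assoc, ← exp_add]
  ring_nf

theorem integral_pow_mul_neg_log_pow (n k : ℕ) :
    ∫ x in Set.Ioo 0 1, x ^ n * (-log x) ^ k = k.factorial / ((n : ℝ) + 1) ^ (k + 1) := by
  simp only [integral_Ioo_zero_one_eq_integral_Ioi_exp_neg,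
    exp_neg_smul_pow_mul_neg_log_pow_exp_neg]
  exact integral_Ioi_pow_mul_exp_neg_mul k (by positivity)

theorem integrableOn_pow_mul_neg_log_pow (n k : ℕ) :
    IntegrableOn (fun x => x ^ n * (-log x) ^ k) (Set.Ioo 0 1) := by
  simp only [integrableOn_Ioo_zero_one_iff_exp_neg, exp_neg_smul_pow_mul_neg_log_pow_exp_neg]
  exact integrableOn_Ioi_pow_mul_exp_neg_mul k (by positivity)

theorem tsum_neg_one_pow_mul_eq_tsum_sub_two_mul {α : Type*} [NormedRing α] [CompleteSpace α]
    {f : ℕ → α} (hf : Summable f) :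
    ∑' n, (-1) ^ n * f n = ∑' n, f n - 2 * ∑' n, f (2 * n + 1) := by
  have h_even : Summable fun n => f (2 * n) :=
    hf.comp_injective (mul_right_injective₀ two_ne_zero)
  have h_odd : Summable fun n => f (2 * n + 1) :=
    hf.comp_injective ((add_left_injective 1).comp (mul_right_injective₀ two_ne_zero))
  have h_split := tsum_even_add_odd h_even h_odd
  have h_alt := tsum_even_add_odd (f := fun n => (-1) ^ n * f n)
    (by simpa [pow_mul] using h_even) (by simpa [pow_add, pow_mul] using h_odd.neg)
  simp only [pow_mul, pow_add, neg_one_sq, one_pow, one_mul, pow_one, mul_neg, mul_one, neg_mul,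
    tsum_neg] at h_alt
  rw [← h_alt, ← h_split, two_mul]
  abel

theorem summable_one_div_nat_add_one_pow {p : ℕ} (hp : 1 < p) :
    Summable fun n : ℕ => 1 / ((n : ℝ) + 1) ^ p := by
  simpa [Nat.cast_add_one] using (summable_nat_add_iff 1).mpr (summable_one_div_nat_pow.mpr hp)

theorem tsum_neg_one_pow_div_nat_add_one_pow {p : ℕ} (hp : 1 < p) :
    ∑' n : ℕ, (-1) ^ n / ((n : ℝ) + 1) ^ p
      = (1 - 2 / 2 ^ p) * ∑' n : ℕ, 1 / ((n : ℝ) + 1) ^ p := by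
  have h_odd (n : ℕ) :
      1 / (((2 * n + 1 : ℕ) : ℝ) + 1) ^ p = 1 / 2 ^ p * (1 / ((n : ℝ) + 1) ^ p) := by
    rw [one_div_mul_one_div, ← mul_pow]
    push_cast
    ring_nf
  simp_rw [div_eq_mul_one_div ((-1 : ℝ) ^ _),
    tsum_neg_one_pow_mul_eq_tsum_sub_two_mul (summable_one_div_nat_add_one_pow hp), h_odd,
    tsum_mul_left]
  ring

theorem integral_Ioo_div_one_add_eq_tsum {g : ℝ → ℝ}
    (hg : ∀ n : ℕ, IntegrableOn (fun x => x ^ n * g x) (Set.Ioo 0 1))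
    (hsum : Summable fun n : ℕ => ∫ x in Set.Ioo 0 1, ‖x ^ n * g x‖) :
    ∫ x in Set.Ioo 0 1, g x / (1 + x) = ∑' n : ℕ, (-1) ^ n * ∫ x in Set.Ioo 0 1, x ^ n * g x := by
  have h_geom : ∀ x ∈ Set.Ioo (0 : ℝ) 1, g x / (1 + x) = ∑' n : ℕ, (-1) ^ n * (x ^ n * g x) := by
    rintro x ⟨hx0, hx1⟩
    have h := (hasSum_geometric_of_abs_lt_one (r := -x)
      (by rwa [abs_neg, abs_of_pos hx0])).mul_right (g x)
    rw [sub_neg_eq_add] at h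
    rw [div_eq_inv_mul, ← h.tsum_eq]
    exact tsum_congr fun n => by rw [neg_pow]; ring
  simp_rw [setIntegral_congr_fun measurableSet_Ioo h_geom, ← integral_const_mul]
  refine (integral_tsum_of_summable_integral_norm (fun n => (hg n).const_mul _) ?_).symm
  simpa [norm_mul] using hsum

theorem integral_neg_log_pow_div_one_add {k : ℕ} (hk : 1 ≤ k) :
    ∫ x in Set.Ioo 0 1, (-log x) ^ k / (1 + x)
      = k.factorial * ∑' n : ℕ, (-1) ^ n / ((n : ℝ) + 1) ^ (k + 1) := by
  have h_norm (n : ℕ) : ∫ x in Set.Ioo 0 1, ‖x ^ n * (-log x) ^ k‖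
      = k.factorial / ((n : ℝ) + 1) ^ (k + 1) := by
    rw [← integral_pow_mul_neg_log_pow n k]
    refine setIntegral_congr_fun measurableSet_Ioo fun x ⟨hx0, hx1⟩ => norm_of_nonneg ?_
    have := neg_nonneg.mpr (log_nonpos hx0.le hx1.le)
    positivity
  rw [integral_Ioo_div_one_add_eq_tsum (integrableOn_pow_mul_neg_log_pow · k)
    (by simpa only [h_norm, mul_one_div] using
      (summable_one_div_nat_add_one_pow (by omega)).mul_left (k.factorial : ℝ)),
    ← tsum_mul_left]
  exact tsum_congr fun n => by rw [integral_pow_mul_neg_log_pow]; ring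

theorem integral_pow_log_div_one_add (k : ℕ) (hk : 1 ≤ k) :
    ∫ x in Set.Ioo (0 : ℝ) 1, (Real.log x) ^ k / (1 + x)
      = (-1 : ℝ) ^ k * (k.factorial : ℝ) * ((2 ^ k - 1) / 2 ^ k) *
        ∑' n : ℕ, (1 : ℝ) / (n + 1) ^ (k + 1) := by
  have h_sign (x : ℝ) : log x ^ k / (1 + x) = (-1) ^ k * ((-log x) ^ k / (1 + x)) := by
    rw [mul_div_assoc', ← mul_pow, neg_one_mul, neg_neg]
  simp_rw [h_sign, integral_const_mul, integral_neg_log_pow_div_one_add hk,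
    tsum_neg_one_pow_div_nat_add_one_pow (p := k + 1) (by omega)]
  field_simp
  ring
end

section
/- For every natural number k ≥ 2, ∫_0^1 ln(1 − x²) · (ln x)^{k−1} / x dx = (−1)^k · (k−1)!/2^k · ζ(k+1). -/
open MeasureTheory Real

/-! Since `-log (1 - x²) / x = ∑ x ^ (2n+1) / (n+1)` on `(0, 1)` and `-log x ≥ 0` there, the
integrand is, up to the sign `(-1)^k`, a series of nonnegative functions, so it can be integrated
termwise. With `m = k - 1`, the substitution `x = exp (-t)` turns each term into the Gamma integral
`∫ t ^ m * exp (-2 (n+1) t) dt = m! / (2 (n+1)) ^ (m+1)` over `(0, ∞)`. -/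

open Set
open scoped Nat

lemma image_exp_neg_Ioi_zero : (fun t : ℝ => exp (-t)) '' Ioi 0 = Ioo 0 1 := by
  rw [show (fun t : ℝ => exp (-t)) = exp ∘ Neg.neg from rfl, image_comp, image_neg_Ioi, neg_zero,
    image_exp_Iio, exp_zero]

lemma integral_Ioo_zero_one_eq_integral_Ioi_exp_neg_s5 {E : Type*} [NormedAddCommGroup E]
    [NormedSpace ℝ E] (g : ℝ → E) :
    ∫ x in Ioo 0 1, g x = ∫ t in Ioi 0, exp (-t) • g (exp (-t)) := by
  rw [← image_exp_neg_Ioi_zero]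
  simpa [abs_of_pos (exp_pos _)] using integral_image_eq_integral_abs_deriv_smul
    measurableSet_Ioi (fun t _ => ((hasDerivAt_neg t).exp).hasDerivWithinAt)
    (fun a _ b _ hab => neg_injective (exp_injective hab)) g

lemma integral_Ioo_pow_mul_neg_log_pow (p m : ℕ) :
    ∫ x in Ioo 0 1, x ^ p * (-log x) ^ m = m ! / ((p : ℝ) + 1) ^ (m + 1) := by
  have hsubst : ∀ t : ℝ, exp (-t) • (exp (-t) ^ p * (-log (exp (-t))) ^ m)
      = t ^ ((m + 1 : ℝ) - 1) * exp (-((p + 1) * t)) := by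
    intro t
    rw [log_exp, neg_neg, add_sub_cancel_right, rpow_natCast, smul_eq_mul, ← exp_nat_mul,
      show -((p + 1) * t) = -t + p * -t by ring, exp_add]
    ring
  rw [integral_Ioo_zero_one_eq_integral_Ioi_exp_neg_s5, funext hsubst,
    integral_rpow_mul_exp_neg_mul_Ioi (by positivity) (by positivity),
    Gamma_nat_eq_factorial, ← Nat.cast_add_one m, rpow_natCast, one_div, inv_pow,
    inv_mul_eq_div]

lemma integrableOn_Ioo_pow_mul_neg_log_pow (p m : ℕ) :
    IntegrableOn (fun x : ℝ => x ^ p * (-log x) ^ m) (Ioo 0 1) :=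
  -- the Bochner integral of a non-integrable function is zero
  Integrable.of_integral_ne_zero (by rw [integral_Ioo_pow_mul_neg_log_pow]; positivity)

lemma hasSum_pow_div_neg_log_one_sub_sq_div {x : ℝ} (hx₀ : x ≠ 0) (hx : |x| < 1) :
    HasSum (fun n : ℕ => x ^ (2 * n + 1) / (n + 1)) (-log (1 - x ^ 2) / x) := by
  have hx2 : |x ^ 2| < 1 := by rwa [abs_pow, pow_lt_one_iff_of_nonneg (abs_nonneg x) two_ne_zero]
  refine ((hasSum_pow_div_log_of_abs_lt_one hx2).div_const x).congr_fun fun n => ?_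
  field_simp
  ring

lemma integral_Ioo_neg_log_one_sub_sq_mul_neg_log_pow_div (m : ℕ) :
    ∫ x in Ioo 0 1, -log (1 - x ^ 2) * (-log x) ^ m / x
      = m ! / 2 ^ (m + 1) * ∑' n : ℕ, (1 : ℝ) / (n + 1) ^ (m + 2) := by
  set f : ℕ → ℝ → ℝ := fun n x => x ^ (2 * n + 1) * (-log x) ^ m / (n + 1)
  have hf_nonneg : ∀ n, ∀ x ∈ Ioo (0 : ℝ) 1, 0 ≤ f n x := fun n x hx => by
    have hlog : 0 ≤ -log x := neg_nonneg.mpr (log_nonpos hx.1.le hx.2.le)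
    have hx₀ : 0 < x := hx.1
    positivity
  have hf_sum : ∀ x ∈ Ioo (0 : ℝ) 1, HasSum (f · x) (-log (1 - x ^ 2) * (-log x) ^ m / x) :=
    fun x hx => by
      simpa only [f, div_mul_eq_mul_div] using (hasSum_pow_div_neg_log_one_sub_sq_div hx.1.ne'
        (abs_lt.mpr ⟨by linarith [hx.1], hx.2⟩)).mul_right ((-log x) ^ m)
  have hf_integral : ∀ n : ℕ, ∫ x in Ioo 0 1, f n x
      = m ! / 2 ^ (m + 1) * (1 / ((n : ℝ) + 1) ^ (m + 2)) := fun n => by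
    simp only [f]
    rw [integral_div, integral_Ioo_pow_mul_neg_log_pow,
      show ((2 * n + 1 : ℕ) : ℝ) + 1 = 2 * (n + 1) by push_cast; ring, mul_pow]
    field_simp
    ring
  have hf_norm : ∀ n, ∫ x in Ioo 0 1, ‖f n x‖ = ∫ x in Ioo 0 1, f n x := fun n =>
    setIntegral_congr_fun measurableSet_Ioo fun x hx => norm_of_nonneg (hf_nonneg n x hx)
  have hsummable : Summable fun n : ℕ => (1 : ℝ) / (n + 1) ^ (m + 2) := by
    exact_mod_cast (summable_nat_add_iff 1).mpr
      (Real.summable_one_div_nat_pow.mpr (by omega : 1 < m + 2))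
  calc ∫ x in Ioo 0 1, -log (1 - x ^ 2) * (-log x) ^ m / x
      = ∫ x in Ioo 0 1, ∑' n, f n x :=
        setIntegral_congr_fun measurableSet_Ioo fun x hx => (hf_sum x hx).tsum_eq.symm
    _ = ∑' n, ∫ x in Ioo 0 1, f n x := by
        refine (integral_tsum_of_summable_integral_norm
          (fun n => (integrableOn_Ioo_pow_mul_neg_log_pow _ m).div_const _) ?_).symm
        exact (hsummable.mul_left _).congr fun n => by rw [hf_norm, hf_integral]
    _ = m ! / 2 ^ (m + 1) * ∑' n : ℕ, (1 : ℝ) / (n + 1) ^ (m + 2) := by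
        rw [tsum_congr hf_integral, tsum_mul_left]

theorem integral_log_one_sub_sq_mul_pow_log (k : ℕ) (hk : 2 ≤ k) :
    ∫ x in Set.Ioo (0 : ℝ) 1, Real.log (1 - x ^ 2) * (Real.log x) ^ (k - 1) / x
      = (-1 : ℝ) ^ k * ((k - 1).factorial : ℝ) / 2 ^ k *
        ∑' n : ℕ, (1 : ℝ) / (n + 1) ^ (k + 1) := by
  obtain ⟨m, rfl⟩ : ∃ m, k = m + 1 := ⟨k - 1, by omega⟩
  have hsign : ∀ x : ℝ, log (1 - x ^ 2) * log x ^ m / x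
      = (-1) ^ (m + 1) * (-log (1 - x ^ 2) * (-log x) ^ m / x) := fun x => by
    rw [show log x ^ m = (-1) ^ m * (-log x) ^ m by rw [← mul_pow, neg_one_mul, neg_neg]]
    ring
  simp_rw [Nat.add_sub_cancel, hsign, integral_const_mul,
    integral_Ioo_neg_log_one_sub_sq_mul_neg_log_pow_div]
  ring
end

section
/- ∫_0^1 ln(1+x) ln(1−x) dx = (ln 2)² − 2 ln 2 + 2 − π²/6. -/
/-!
Reflecting `x ↦ 1 - x` turns the integrand into
`log (2 - x) * log x = log 2 * log x + log (1 - x / 2) * log x`.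
Expanding `-log (1 - x / 2)` in powers of `x` and integrating termwise against `-log x`
gives `∫₀¹ log (1 - x / 2) log x = 2 - log 2 - 2 Li₂(1/2)`.
Euler's reflection formula `Li₂ a + Li₂ (1 - a) = π² / 6 - log a log (1 - a)`,
obtained by splitting `ζ(2) = ∫₀¹ -log (1 - x) / x` at `1 - a` and substituting `x ↦ 1 - x`
in the tail, then yields `Li₂(1/2) = π² / 12 - (log 2)² / 2`.
-/

open MeasureTheory Real Set

theorem MeasureTheory.integral_eq_of_hasSum_of_nonneg {α ι : Type*} [MeasurableSpace α]
    [Countable ι] {μ : Measure α} {F : ι → α → ℝ} {f : α → ℝ} {S : ℝ}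
    (hF_nonneg : ∀ n, 0 ≤ᵐ[μ] F n) (hF_int : ∀ n, Integrable (F n) μ)
    (hS : HasSum (fun n ↦ ∫ x, F n x ∂μ) S)
    (hf : ∀ᵐ x ∂μ, HasSum (fun n ↦ F n x) (f x)) :
    ∫ x, f x ∂μ = S := by
  have hnorm (n : ι) : ∫ x, ‖F n x‖ ∂μ = ∫ x, F n x ∂μ :=
    integral_congr_ae <| (hF_nonneg n).mono fun x hx ↦ Real.norm_of_nonneg hx
  rw [← hS.tsum_eq,
    integral_tsum_of_summable_integral_norm hF_int (by simpa only [hnorm] using hS.summable)]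
  exact integral_congr_ae <| hf.mono fun x hx ↦ hx.tsum_eq.symm

theorem intervalIntegral.integral_eq_of_hasSum_of_nonneg {ι : Type*} [Countable ι] {a b : ℝ}
    (hab : a ≤ b) {F : ι → ℝ → ℝ} {f : ℝ → ℝ} {S : ℝ}
    (hF_nonneg : ∀ n, ∀ x ∈ Ioo a b, 0 ≤ F n x)
    (hF_int : ∀ n, IntervalIntegrable (F n) volume a b)
    (hS : HasSum (fun n ↦ ∫ x in a..b, F n x) S)
    (hf : ∀ x ∈ Ioo a b, HasSum (fun n ↦ F n x) (f x)) :
    ∫ x in a..b, f x = S := by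
  simp only [intervalIntegral.integral_of_le hab, integral_Ioc_eq_integral_Ioo] at hS ⊢
  refine MeasureTheory.integral_eq_of_hasSum_of_nonneg (fun n ↦ ?_) (fun n ↦ ?_) hS ?_
  · exact ae_restrict_of_forall_mem measurableSet_Ioo (hF_nonneg n)
  · exact ((hF_int n).1).mono_set Ioo_subset_Ioc_self
  · exact ae_restrict_of_forall_mem measurableSet_Ioo hf

theorem intervalIntegrable_pow_mul_neg_log (n : ℕ) (a b : ℝ) :
    IntervalIntegrable (fun x ↦ x ^ n * -log x) volume a b :=
  intervalIntegral.intervalIntegrable_log'.neg.continuousOn_mul (continuous_pow n).continuousOn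

theorem integral_pow_mul_log (n : ℕ) (a : ℝ) :
    ∫ x in 0..a, x ^ n * log x = a ^ (n + 1) * log a / (n + 1) - a ^ (n + 1) / (n + 1) ^ 2 := by
  have hcont :
      Continuous fun x : ℝ ↦ x ^ (n + 1) * log x / (n + 1) - x ^ (n + 1) / (n + 1) ^ 2 := by
    simp only [pow_succ, mul_assoc]
    fun_prop
  have hderiv (x : ℝ) (hx : x ≠ 0) :
      HasDerivAt (fun x : ℝ ↦ x ^ (n + 1) * log x / (n + 1) - x ^ (n + 1) / (n + 1) ^ 2)
        (x ^ n * log x) x := by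
    refine ((((hasDerivAt_pow (n + 1) x).mul (hasDerivAt_log hx)).div_const (n + 1 : ℝ)).sub
      ((hasDerivAt_pow (n + 1) x).div_const ((n + 1 : ℝ) ^ 2))).congr_deriv ?_
    simp only [Nat.cast_add, Nat.cast_one, Nat.add_sub_cancel]
    field_simp
    ring
  rw [intervalIntegral.integral_eq_sub_of_hasDeriv_right hcont.continuousOn
    (fun x hx ↦ (hderiv x ?_).hasDerivWithinAt)
    (intervalIntegral.intervalIntegrable_log'.continuousOn_mul (continuous_pow n).continuousOn)]
  · simp
  · rintro rfl
    simp only [mem_Ioo, min_lt_iff, lt_max_iff, lt_self_iff_false, false_or] at hx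
    linarith [hx.1, hx.2]

-- The power series of `Li₂`; outside `|a| ≤ 1` it diverges and `tsum` returns `0`.
noncomputable def dilog (a : ℝ) : ℝ := ∑' n : ℕ, a ^ (n + 1) / (n + 1) ^ 2

theorem hasSum_dilog {a : ℝ} (ha : |a| ≤ 1) :
    HasSum (fun n : ℕ ↦ a ^ (n + 1) / (n + 1) ^ 2) (dilog a) := by
  refine Summable.hasSum <| Summable.of_norm_bounded
    ((summable_nat_add_iff 1).2 (Real.summable_one_div_nat_pow.2 one_lt_two)) fun n ↦ ?_
  rw [norm_div, norm_pow, Real.norm_eq_abs, Real.norm_of_nonneg (by positivity)]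
  push_cast
  gcongr
  exact pow_le_one₀ (abs_nonneg a) ha

theorem dilog_one : dilog 1 = π ^ 2 / 6 := by
  refine (hasSum_dilog (by simp)).unique ?_
  simpa using (hasSum_nat_add_iff' 1).2 hasSum_zeta_two

theorem hasSum_pow_div_succ_of_abs_lt_one {x : ℝ} (hx₀ : x ≠ 0) (hx : |x| < 1) :
    HasSum (fun n : ℕ ↦ x ^ n / (n + 1)) (-log (1 - x) / x) := by
  have h := (hasSum_pow_div_log_of_abs_lt_one hx).div_const x
  have h' : (fun n : ℕ ↦ x ^ (n + 1) / (n + 1) / x) = fun n : ℕ ↦ x ^ n / (n + 1) := by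
    ext n
    rw [pow_succ]
    field_simp
  rwa [h'] at h

theorem integral_neg_log_one_sub_div {a : ℝ} (ha₀ : 0 ≤ a) (ha₁ : a ≤ 1) :
    ∫ x in 0..a, -log (1 - x) / x = dilog a := by
  refine intervalIntegral.integral_eq_of_hasSum_of_nonneg ha₀
    (F := fun (n : ℕ) x ↦ x ^ n / (n + 1)) (fun n x hx ↦ by have := hx.1.le; positivity)
    (fun n ↦ (by fun_prop : Continuous _).intervalIntegrable _ _) ?_
    fun x hx ↦ hasSum_pow_div_succ_of_abs_lt_one hx.1.ne'
      (by rw [abs_of_pos hx.1]; linarith [hx.2])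
  convert hasSum_dilog (abs_le.2 ⟨by linarith, ha₁⟩) using 2 with n
  rw [intervalIntegral.integral_div, integral_pow, zero_pow n.succ_ne_zero, sub_zero, div_div, sq]

theorem integral_neg_log_div_one_sub {a : ℝ} (ha₀ : 0 < a) (ha₁ : a < 1) :
    ∫ x in 0..a, -log x / (1 - x) = log a * log (1 - a) + dilog a := by
  refine intervalIntegral.integral_eq_of_hasSum_of_nonneg ha₀.le
    (F := fun (k : ℕ) x ↦ x ^ k * -log x) (fun k x hx ↦ ?_) (fun k ↦ ?_) ?_ fun x hx ↦ ?_
  · have := neg_nonneg.2 (log_nonpos hx.1.le (by linarith [hx.2]))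
    have := hx.1.le
    positivity
  · exact intervalIntegrable_pow_mul_neg_log k 0 a
  · have hterm : (fun k : ℕ ↦ ∫ x in 0..a, x ^ k * -log x) =
        fun k : ℕ ↦ -log a * (a ^ (k + 1) / (k + 1)) + a ^ (k + 1) / (k + 1) ^ 2 := by
      ext k
      simp only [mul_neg, intervalIntegral.integral_neg, integral_pow_mul_log]
      ring
    rw [hterm, show log a * log (1 - a) = -log a * -log (1 - a) by ring]
    exact ((hasSum_pow_div_log_of_abs_lt_one (by rwa [abs_of_pos ha₀])).mul_left (-log a)).add
      (hasSum_dilog (abs_le.2 ⟨by linarith, ha₁.le⟩))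
  · have h := (hasSum_geometric_of_lt_one hx.1.le (by linarith [hx.2])).mul_right (-log x)
    rwa [← div_eq_inv_mul] at h

theorem dilog_add_dilog_one_sub {a : ℝ} (ha₀ : 0 < a) (ha₁ : a < 1) :
    dilog a + dilog (1 - a) = π ^ 2 / 6 - log a * log (1 - a) := by
  -- integrable because its integral is `ζ(2) ≠ 0`, not the junk value `0`
  have hint : IntervalIntegrable (fun x ↦ -log (1 - x) / x) volume 0 1 :=
    intervalIntegral.intervalIntegrable_of_integral_ne_zero <| by
      rw [integral_neg_log_one_sub_div zero_le_one le_rfl, dilog_one]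
      positivity
  have htail : ∫ x in (1 - a)..1, -log (1 - x) / x = log a * log (1 - a) + dilog a := by
    rw [← integral_neg_log_div_one_sub ha₀ ha₁]
    simpa using (intervalIntegral.integral_comp_sub_left
      (fun x ↦ -log (1 - x) / x) 1 (a := 0) (b := a)).symm
  rw [← dilog_one, ← integral_neg_log_one_sub_div zero_le_one le_rfl,
    ← intervalIntegral.integral_add_adjacent_intervals (b := 1 - a)
      (hint.mono_set ?_) (hint.mono_set ?_),
    integral_neg_log_one_sub_div (by linarith) (by linarith), htail]
  · ring
  all_goals apply uIcc_subset_uIcc <;> rw [mem_uIcc] <;> left <;> constructor <;> linarith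

theorem hasSum_pow_div_mul_sq {a : ℝ} (ha₀ : a ≠ 0) (ha : |a| < 1) :
    HasSum (fun n : ℕ ↦ a ^ (n + 1) / ((n + 1) * (n + 2) ^ 2))
      ((2 * a + (1 - a) * log (1 - a) - dilog a) / a) := by
  have hlog := hasSum_pow_div_log_of_abs_lt_one ha
  have hlog' := (hasSum_nat_add_iff' 1).2 hlog
  have hdilog' := (hasSum_nat_add_iff' 1).2 (hasSum_dilog ha.le)
  simp only [Finset.sum_range_one, Nat.cast_zero, zero_add, pow_one, one_pow, div_one]
    at hlog' hdilog'
  -- `1 / ((n + 1) (n + 2)²) = 1 / (n + 1) - 1 / (n + 2) - 1 / (n + 2)²`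
  have h := hlog.sub ((hlog'.add hdilog').div_const a)
  have hterm : (fun n : ℕ ↦ a ^ (n + 1) / (n + 1) -
      (a ^ (n + 1 + 1) / ((n + 1 : ℕ) + 1) + a ^ (n + 1 + 1) / ((n + 1 : ℕ) + 1) ^ 2) / a) =
      fun n : ℕ ↦ a ^ (n + 1) / ((n + 1) * (n + 2) ^ 2) := by
    ext n
    push_cast
    field_simp
    ring
  have hval : (2 * a + (1 - a) * log (1 - a) - dilog a) / a =
      -log (1 - a) - (-log (1 - a) - a + (dilog a - a)) / a := by
    field_simp
    ring
  rwa [hterm, ← hval] at h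

theorem integral_log_one_sub_mul_mul_log {a : ℝ} (ha₀ : 0 < a) (ha₁ : a < 1) :
    ∫ x in 0..1, log (1 - a * x) * log x = (2 * a + (1 - a) * log (1 - a) - dilog a) / a := by
  refine intervalIntegral.integral_eq_of_hasSum_of_nonneg zero_le_one
    (F := fun (n : ℕ) x ↦ a ^ (n + 1) / (n + 1) * (x ^ (n + 1) * -log x)) (fun n x hx ↦ ?_)
    (fun n ↦ ?_) ?_ fun x hx ↦ ?_
  · have := neg_nonneg.2 (log_nonpos hx.1.le hx.2.le)
    have := hx.1.le
    positivity
  · exact (intervalIntegrable_pow_mul_neg_log (n + 1) 0 1).const_mul _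
  · have hterm : (fun n : ℕ ↦ ∫ x in 0..1, a ^ (n + 1) / (n + 1) * (x ^ (n + 1) * -log x)) =
        fun n : ℕ ↦ a ^ (n + 1) / ((n + 1) * (n + 2) ^ 2) := by
      ext n
      simp only [intervalIntegral.integral_const_mul, mul_neg, intervalIntegral.integral_neg,
        integral_pow_mul_log, log_one]
      push_cast
      field_simp
      ring
    rw [hterm]
    exact hasSum_pow_div_mul_sq ha₀.ne' (by rwa [abs_of_pos ha₀])
  · have hax : |a * x| < 1 := by
      rw [abs_of_pos (mul_pos ha₀ hx.1)]
      nlinarith [hx.1, hx.2]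
    have h := (hasSum_pow_div_log_of_abs_lt_one hax).mul_right (-log x)
    have hterm : (fun n : ℕ ↦ (a * x) ^ (n + 1) / (n + 1) * -log x) =
        fun n : ℕ ↦ a ^ (n + 1) / (n + 1) * (x ^ (n + 1) * -log x) := by
      ext n
      ring
    rwa [hterm, neg_mul_neg] at h

theorem dilog_one_half : dilog (1 / 2) = π ^ 2 / 12 - log 2 ^ 2 / 2 := by
  have h := dilog_add_dilog_one_sub (a := 1 / 2) (by norm_num) (by norm_num)
  rw [show (1 : ℝ) - 1 / 2 = 1 / 2 by norm_num, one_div, log_inv] at h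
  rw [one_div]
  linarith

theorem integral_log_two_sub_mul_log :
    ∫ x in 0..1, log (2 - x) * log x = log 2 ^ 2 - 2 * log 2 + 2 - π ^ 2 / 6 := by
  have hsplit : ∀ x ∈ uIcc (0 : ℝ) 1,
      log (2 - x) * log x = log 2 * log x + log (1 - 1 / 2 * x) * log x := by
    intro x hx
    rw [uIcc_of_le zero_le_one] at hx
    rw [show 2 - x = 2 * (1 - 1 / 2 * x) by ring, log_mul two_ne_zero (by linarith [hx.2])]
    ring
  have hint : IntervalIntegrable (fun x ↦ log (1 - 1 / 2 * x) * log x) volume 0 1 := by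
    refine intervalIntegral.intervalIntegrable_log'.continuousOn_mul
      (ContinuousOn.log (by fun_prop) fun x hx ↦ ?_)
    rw [uIcc_of_le zero_le_one] at hx
    linarith [hx.2]
  rw [intervalIntegral.integral_congr hsplit, intervalIntegral.integral_add
      (intervalIntegral.intervalIntegrable_log'.const_mul _) hint,
    intervalIntegral.integral_const_mul, integral_log,
    integral_log_one_sub_mul_mul_log (by norm_num) (by norm_num), dilog_one_half,
    show (1 : ℝ) - 1 / 2 = 2⁻¹ by norm_num, log_inv, log_one]
  ring

theorem integral_log_one_add_mul_log_one_sub :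
    ∫ x in Set.Ioo (0 : ℝ) 1, Real.log (1 + x) * Real.log (1 - x)
      = (Real.log 2) ^ 2 - 2 * Real.log 2 + 2 - Real.pi ^ 2 / 6 := by
  rw [← integral_Ioc_eq_integral_Ioo, ← intervalIntegral.integral_of_le zero_le_one,
    ← integral_log_two_sub_mul_log]
  calc ∫ x in 0..1, log (1 + x) * log (1 - x)
      = ∫ x in 0..1, log (1 + (1 - x)) * log (1 - (1 - x)) := by
        simpa using (intervalIntegral.integral_comp_sub_left
          (fun x ↦ log (1 + x) * log (1 - x)) (1 : ℝ) (a := 0) (b := 1)).symm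
    _ = ∫ x in 0..1, log (2 - x) * log x := by
        congr with x
        ring_nf
end

section
/- a₂ = ∫_1^2 (ln x)²/(x−1) dx = ζ(3)/4. -/
/-!
Shifting by one, the integral is `∫₀¹ log² (1 + x) / x`. With `a = log (1 - x)` and
`b = log (1 + x)` one has `b² = ((a + b)² + (a - b)²) / 2 - a²`, and the substitutions
`x ↦ 1 - x`, `x ↦ x²` and `x ↦ (1 - x) / (1 + x)` turn the three resulting integrals into
`∫₀¹ log² t / (1 - t) = 2 ζ(3)` and `∫₀¹ log² t / (1 - t²) = 7/4 ζ(3)`. These two follow by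
expanding the denominator in a geometric series and integrating termwise with
`∫₀¹ tⁿ log² t dt = 2 / (n + 1)³`.
-/

open MeasureTheory Real Set Filter
open scoped Nat

/-- Bochner's `∫` is `0` for non-integrable functions, so the value is paired with integrability. -/
def HasIntegral {α : Type*} [MeasurableSpace α] (f : α → ℝ) (μ : Measure α) (c : ℝ) : Prop :=
  Integrable f μ ∧ ∫ x, f x ∂μ = c

namespace HasIntegral

variable {α : Type*} [MeasurableSpace α] {μ : Measure α} {f g : α → ℝ} {a b : ℝ}

theorem add (hf : HasIntegral f μ a) (hg : HasIntegral g μ b) :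
    HasIntegral (fun x => f x + g x) μ (a + b) :=
  ⟨hf.1.add hg.1, by rw [integral_add hf.1 hg.1, hf.2, hg.2]⟩

theorem sub (hf : HasIntegral f μ a) (hg : HasIntegral g μ b) :
    HasIntegral (fun x => f x - g x) μ (a - b) :=
  ⟨hf.1.sub hg.1, by rw [integral_sub hf.1 hg.1, hf.2, hg.2]⟩

theorem const_mul (hf : HasIntegral f μ a) (c : ℝ) :
    HasIntegral (fun x => c * f x) μ (c * a) :=
  ⟨hf.1.const_mul c, by rw [integral_const_mul, hf.2]⟩

theorem congr (hf : HasIntegral f μ a) (h : f =ᵐ[μ] g) : HasIntegral g μ a :=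
  ⟨hf.1.congr h, (integral_congr_ae h).symm.trans hf.2⟩

theorem congr_value (hf : HasIntegral f μ a) (h : a = b) : HasIntegral f μ b := h ▸ hf

theorem of_hasSum_of_nonneg {F : ℕ → α → ℝ} {a : ℕ → ℝ}
    (hF : ∀ n, HasIntegral (F n) μ (a n)) (hF_nonneg : ∀ n, 0 ≤ᵐ[μ] F n)
    (hsum : ∀ᵐ x ∂μ, HasSum (fun n => F n x) (f x)) (ha : Summable a) :
    HasIntegral f μ (∑' n, a n) := by
  have hf_meas : AEStronglyMeasurable f μ :=
    aestronglyMeasurable_of_tendsto_ae atTop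
      (fun n => (integrable_finsetSum (Finset.range n) fun i _ => (hF i).1).1)
      (hsum.mono fun x hx => hx.tendsto_sum_nat)
  have hall_nonneg : ∀ᵐ x ∂μ, ∀ n, 0 ≤ F n x := ae_all_iff.2 hF_nonneg
  have hf_nonneg : 0 ≤ᵐ[μ] f := by
    filter_upwards [hsum, hall_nonneg] with x hx h0 using hx.nonneg h0
  have ha_nonneg : ∀ n, 0 ≤ a n := fun n => (hF n).2 ▸ integral_nonneg_of_ae (hF_nonneg n)
  have hlintegral : ∫⁻ x, ENNReal.ofReal (f x) ∂μ = ENNReal.ofReal (∑' n, a n) := calc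
    ∫⁻ x, ENNReal.ofReal (f x) ∂μ = ∫⁻ x, ∑' n, ENNReal.ofReal (F n x) ∂μ := by
      refine lintegral_congr_ae ?_
      filter_upwards [hsum, hall_nonneg] with x hx h0
      rw [← hx.tsum_eq, ENNReal.ofReal_tsum_of_nonneg h0 hx.summable]
    _ = ∑' n, ∫⁻ x, ENNReal.ofReal (F n x) ∂μ :=
      lintegral_tsum fun n => (hF n).1.aemeasurable.ennreal_ofReal
    _ = ∑' n, ENNReal.ofReal (a n) := by
      congr 1 with n
      rw [← (hF n).2, ofReal_integral_eq_lintegral_ofReal (hF n).1 (hF_nonneg n)]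
    _ = ENNReal.ofReal (∑' n, a n) := (ENNReal.ofReal_tsum_of_nonneg ha_nonneg ha).symm
  refine ⟨⟨hf_meas, (hasFiniteIntegral_iff_ofReal hf_nonneg).2
    (hlintegral ▸ ENNReal.ofReal_lt_top)⟩, ?_⟩
  rw [integral_eq_lintegral_of_nonneg_ae hf_nonneg hf_meas, hlintegral,
    ENNReal.toReal_ofReal (tsum_nonneg ha_nonneg)]

end HasIntegral

theorem hasIntegral_comp_iff {s t : Set ℝ} (hs : MeasurableSet s) {ψ ψ' g : ℝ → ℝ} {c : ℝ}
    (hψ : BijOn ψ s t) (hψ' : ∀ x ∈ s, HasDerivWithinAt ψ (ψ' x) s x) :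
    HasIntegral (fun x => |ψ' x| * g (ψ x)) (volume.restrict s) c ↔
      HasIntegral g (volume.restrict t) c := by
  rw [← hψ.image_eq]
  exact and_congr (integrableOn_image_iff_integrableOn_abs_deriv_smul hs hψ' hψ.injOn g).symm
    (by rw [integral_image_eq_integral_abs_deriv_smul hs hψ' hψ.injOn]; rfl)

theorem hasIntegral_pow_mul_exp_neg_mul (k : ℕ) {r : ℝ} (hr : 0 < r) :
    HasIntegral (fun u => u ^ k * exp (-(r * u))) (volume.restrict (Ioi 0))
      (k ! / r ^ (k + 1)) := by
  have hint := integrableOn_rpow_mul_exp_neg_mul_rpow (s := k) (p := 1)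
    (by linarith [k.cast_nonneg (α := ℝ)]) one_pos hr
  have hval := integral_rpow_mul_exp_neg_mul_Ioi (a := k + 1) (by positivity) hr
  simp only [rpow_one, rpow_natCast, neg_mul] at hint
  simp only [add_sub_cancel_right, rpow_natCast] at hval
  rw [Gamma_nat_eq_factorial, ← Nat.cast_succ, rpow_natCast] at hval
  refine ⟨hint, hval.trans ?_⟩
  rw [div_pow, one_pow, Nat.succ_eq_add_one, one_div_mul_eq_div]

theorem bijOn_exp_neg_Ioi : BijOn (fun u => exp (-u)) (Ioi 0) (Ioo 0 1) :=
  InvOn.bijOn (f' := fun x => -log x) ⟨fun u _ => by simp, fun x hx => by simp [exp_log hx.1]⟩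
    (fun u hu => ⟨exp_pos _, exp_lt_one_iff.2 (neg_neg_of_pos hu)⟩)
    (fun x hx => neg_pos.2 (log_neg hx.1 hx.2))

theorem bijOn_one_sub_Ioo : BijOn (fun x : ℝ => 1 - x) (Ioo 0 1) (Ioo 0 1) :=
  have hmaps : MapsTo (fun x : ℝ => 1 - x) (Ioo 0 1) (Ioo 0 1) :=
    fun x hx => ⟨by linarith [hx.2], by linarith [hx.1]⟩
  InvOn.bijOn ⟨fun x _ => sub_sub_cancel 1 x, fun x _ => sub_sub_cancel 1 x⟩ hmaps hmaps

theorem bijOn_sq_Ioo : BijOn (fun x : ℝ => x ^ 2) (Ioo 0 1) (Ioo 0 1) :=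
  InvOn.bijOn (f' := sqrt) ⟨fun x hx => sqrt_sq hx.1.le, fun y hy => sq_sqrt hy.1.le⟩
    (fun x hx => ⟨by nlinarith [hx.1], by nlinarith [hx.1, hx.2]⟩)
    (fun y hy => ⟨sqrt_pos.2 hy.1, (sqrt_lt' one_pos).2 (by simpa using hy.2)⟩)

theorem bijOn_one_sub_div_one_add_Ioo :
    BijOn (fun x : ℝ => (1 - x) / (1 + x)) (Ioo 0 1) (Ioo 0 1) :=
  have hmaps : MapsTo (fun x : ℝ => (1 - x) / (1 + x)) (Ioo 0 1) (Ioo 0 1) := fun x hx =>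
    ⟨div_pos (by linarith [hx.2]) (by linarith [hx.1]),
      (div_lt_one (by linarith [hx.1])).2 (by linarith [hx.1])⟩
  have hinvol : LeftInvOn (fun x : ℝ => (1 - x) / (1 + x)) (fun x : ℝ => (1 - x) / (1 + x))
      (Ioo 0 1) :=
    fun x hx => by have := hx.1; field_simp; ring
  InvOn.bijOn ⟨hinvol, hinvol⟩ hmaps hmaps

theorem bijOn_add_one_Ioo : BijOn (fun x : ℝ => x + 1) (Ioo 0 1) (Ioo 1 2) :=
  InvOn.bijOn (f' := fun y => y - 1)
    ⟨fun x _ => add_sub_cancel_right x 1, fun y _ => sub_add_cancel y 1⟩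
    (fun x hx => ⟨by linarith [hx.1], by linarith [hx.2]⟩)
    (fun y hy => ⟨by linarith [hy.1], by linarith [hy.2]⟩)

theorem hasIntegral_pow_mul_neg_log_pow (n k : ℕ) :
    HasIntegral (fun x => x ^ n * (-log x) ^ k) (volume.restrict (Ioo 0 1))
      (k ! / ((n : ℝ) + 1) ^ (k + 1)) := by
  refine (hasIntegral_comp_iff measurableSet_Ioi bijOn_exp_neg_Ioi
    fun u _ => (hasDerivAt_neg u).exp.hasDerivWithinAt).1 ?_
  refine (hasIntegral_pow_mul_exp_neg_mul k (r := n + 1) (by positivity)).congr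
    (ae_restrict_of_forall_mem measurableSet_Ioi fun u _ => ?_)
  dsimp only
  rw [abs_mul, abs_neg, abs_one, abs_of_pos (exp_pos _), log_exp, neg_neg, ← exp_nat_mul,
    show -(((n : ℝ) + 1) * u) = -u + n * -u by ring, exp_add]
  ring

theorem hasIntegral_neg_log_pow_div_one_sub_pow {k m : ℕ} (hk : 0 < k) (hm : 0 < m) :
    HasIntegral (fun x => (-log x) ^ k / (1 - x ^ m)) (volume.restrict (Ioo 0 1))
      (∑' n : ℕ, k ! / ((m : ℝ) * n + 1) ^ (k + 1)) := by
  have hterm (n : ℕ) := hasIntegral_pow_mul_neg_log_pow (m * n) k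
  push_cast at hterm
  refine HasIntegral.of_hasSum_of_nonneg hterm
    (fun n => ae_restrict_of_forall_mem measurableSet_Ioo fun x hx => ?_)
    (ae_restrict_of_forall_mem measurableSet_Ioo fun x hx => ?_) ?_
  · exact mul_nonneg (pow_nonneg hx.1.le _)
      (pow_nonneg (neg_nonneg.2 (log_nonpos hx.1.le hx.2.le)) _)
  · have hxm : x ^ m < 1 := pow_lt_one₀ hx.1.le hx.2 hm.ne'
    have := (hasSum_geometric_of_lt_one (pow_nonneg hx.1.le m) hxm).mul_left ((-log x) ^ k)
    simpa only [← pow_mul, mul_comm, div_eq_mul_inv] using this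
  · refine Summable.of_nonneg_of_le (fun n => by positivity) (fun n => ?_)
      (((summable_nat_add_iff 1).2 (summable_one_div_nat_pow.2 one_lt_two)).mul_left (k ! : ℝ))
    have h1 : (1 : ℝ) ≤ (n : ℝ) + 1 := by linarith [n.cast_nonneg (α := ℝ)]
    have h2 : (n : ℝ) + 1 ≤ m * n + 1 := by
      nlinarith [(Nat.one_le_cast (α := ℝ)).2 hm, n.cast_nonneg (α := ℝ)]
    push_cast
    rw [mul_one_div]
    gcongr
    calc ((n : ℝ) + 1) ^ 2 ≤ ((n : ℝ) + 1) ^ (k + 1) := pow_le_pow_right₀ h1 (by omega)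
      _ ≤ _ := by gcongr

theorem tsum_one_div_two_mul_add_one_pow {p : ℕ} (hp : 1 < p) :
    ∑' n : ℕ, 1 / (2 * (n : ℝ) + 1) ^ p = (1 - 1 / 2 ^ p) * ∑' n : ℕ, 1 / ((n : ℝ) + 1) ^ p := by
  set f : ℕ → ℝ := fun n => 1 / ((n : ℝ) + 1) ^ p
  have hf : Summable f := by
    simpa [f, Nat.cast_add] using (summable_nat_add_iff 1).2 (summable_one_div_nat_pow.2 hp)
  have hodd : ∀ n : ℕ, f (2 * n + 1) = 1 / 2 ^ p * f n := fun n => by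
    simp only [f]; push_cast; rw [one_div_mul_one_div, ← mul_pow]; ring_nf
  have hsplit := tsum_even_add_odd (hf.comp_injective (mul_right_injective₀ two_ne_zero))
    (hf.comp_injective ((add_left_injective 1).comp (mul_right_injective₀ two_ne_zero)))
  simp only [hodd, tsum_mul_left] at hsplit
  have heven : ∀ n : ℕ, f (2 * n) = 1 / (2 * (n : ℝ) + 1) ^ p := fun n => by simp [f]
  simp only [heven] at hsplit
  linear_combination hsplit

local notation "ζ₃" => ∑' k : ℕ, (1 : ℝ) / ((k : ℝ) + 1) ^ 3

theorem hasIntegral_log_sq_div_one_sub :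
    HasIntegral (fun x => log x ^ 2 / (1 - x)) (volume.restrict (Ioo 0 1)) (2 * ζ₃) := by
  refine ((hasIntegral_neg_log_pow_div_one_sub_pow two_pos one_pos).congr
    (ae_of_all _ fun x => by simp)).congr_value ?_
  rw [← tsum_mul_left]
  congr 1 with n
  simp [div_eq_mul_inv]

theorem hasIntegral_log_sq_div_one_sub_sq :
    HasIntegral (fun x => log x ^ 2 / (1 - x ^ 2)) (volume.restrict (Ioo 0 1)) (7 / 4 * ζ₃) := by
  refine ((hasIntegral_neg_log_pow_div_one_sub_pow two_pos two_pos).congr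
    (ae_of_all _ fun x => by simp)).congr_value ?_
  have hodd := tsum_one_div_two_mul_add_one_pow (p := 3) (by norm_num)
  simp only [Nat.factorial_two, Nat.cast_ofNat, Nat.reduceAdd]
  rw [show (7 / 4 : ℝ) = 2 * (1 - 1 / 2 ^ 3) by norm_num, mul_assoc, ← hodd, ← tsum_mul_left]
  simp only [mul_one_div]

theorem hasIntegral_log_one_sub_sq_div :
    HasIntegral (fun x => log (1 - x) ^ 2 / x) (volume.restrict (Ioo 0 1)) (2 * ζ₃) := by
  refine ((hasIntegral_comp_iff measurableSet_Ioo bijOn_one_sub_Ioo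
    fun x _ => ((hasDerivAt_id x).const_sub 1).hasDerivWithinAt).2
      hasIntegral_log_sq_div_one_sub).congr (ae_of_all _ fun x => ?_)
  simp

theorem hasIntegral_log_one_sub_sq_sq_div :
    HasIntegral (fun x => log (1 - x ^ 2) ^ 2 / x) (volume.restrict (Ioo 0 1)) ζ₃ := by
  have h := ((hasIntegral_comp_iff measurableSet_Ioo bijOn_sq_Ioo
    fun x _ => (hasDerivAt_pow 2 x).hasDerivWithinAt).2 hasIntegral_log_one_sub_sq_div).const_mul
      (1 / 2)
  refine (h.congr (ae_restrict_of_forall_mem measurableSet_Ioo fun x hx => ?_)).congr_value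
    (by ring)
  have := hx.1
  dsimp only
  rw [abs_of_pos (by positivity)]
  field_simp
  ring

theorem hasIntegral_log_one_sub_div_one_add_sq_div :
    HasIntegral (fun x => log ((1 - x) / (1 + x)) ^ 2 / x) (volume.restrict (Ioo 0 1))
      (7 / 2 * ζ₃) := by
  have hderiv (x : ℝ) (hx : x ∈ Ioo (0 : ℝ) 1) :
      HasDerivWithinAt (fun x : ℝ => (1 - x) / (1 + x)) (-2 / (1 + x) ^ 2) (Ioo 0 1) x := by
    have : HasDerivAt (fun x : ℝ => (1 - x) / (1 + x)) _ x :=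
      ((hasDerivAt_id' x).const_sub 1).div ((hasDerivAt_id' x).const_add 1)
        (by linarith [hx.1] : 1 + x ≠ 0)
    exact (this.congr_deriv (by ring)).hasDerivWithinAt
  have h := ((hasIntegral_comp_iff measurableSet_Ioo bijOn_one_sub_div_one_add_Ioo hderiv).2
    hasIntegral_log_sq_div_one_sub_sq).const_mul 2
  refine (h.congr (ae_restrict_of_forall_mem measurableSet_Ioo fun x hx => ?_)).congr_value
    (by ring)
  have hadd : 0 < 1 + x := by linarith [hx.1]
  have hden : 1 - ((1 - x) / (1 + x)) ^ 2 = 4 * x / (1 + x) ^ 2 := by field_simp; ring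
  dsimp only
  rw [hden, abs_div, abs_neg, abs_two, abs_of_pos (by positivity)]
  field_simp [hx.1.ne']
  ring

theorem hasIntegral_log_one_add_sq_div :
    HasIntegral (fun x => log (1 + x) ^ 2 / x) (volume.restrict (Ioo 0 1)) (ζ₃ / 4) := by
  refine ((((hasIntegral_log_one_sub_sq_sq_div.const_mul (1 / 2)).add
    (hasIntegral_log_one_sub_div_one_add_sq_div.const_mul (1 / 2))).sub
      hasIntegral_log_one_sub_sq_div).congr
        (ae_restrict_of_forall_mem measurableSet_Ioo fun x hx => ?_)).congr_value (by ring)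
  dsimp only
  have hsub : 0 < 1 - x := by linarith [hx.2]
  have hadd : 0 < 1 + x := by linarith [hx.1]
  rw [show 1 - x ^ 2 = (1 - x) * (1 + x) by ring, log_mul hsub.ne' hadd.ne',
    log_div hsub.ne' hadd.ne']
  ring

theorem nielsen_ramanujan_two :
    ∫ x in Set.Ioo (1 : ℝ) 2, (Real.log x) ^ 2 / (x - 1)
      = (∑' k : ℕ, (1 : ℝ) / (k + 1) ^ 3) / 4 := by
  have h := (hasIntegral_comp_iff (g := fun x => log x ^ 2 / (x - 1)) measurableSet_Ioo
    bijOn_add_one_Ioo fun x _ => ((hasDerivAt_id x).add_const 1).hasDerivWithinAt).1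
      (hasIntegral_log_one_add_sq_div.congr (ae_of_all _ fun x => by simp [add_comm]))
  exact h.2
end

section
/- For every natural number k ≥ 1, ∫_1^2 (ln x)^k/(x−1) dx = k! ζ(k+1) − (k/(k+1)) (ln 2)^{k+1} − k! ∑_{j=0}^{k−1} (ln 2)^j / j! · Li_{k+1−j}(1/2). -/
open MeasureTheory Real

/-- The polylogarithm `Li_m(x) = ∑_{n ≥ 1} x^n / n^m`. -/
noncomputable def polylog (m : ℕ) (x : ℝ) : ℝ := ∑' n : ℕ, x ^ (n + 1) / ((n : ℝ) + 1) ^ m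

/-!
Expanding `1 / (x - 1) = ∑_{n ≥ 0} x^{-(n+1)}` for `x > 1` and integrating termwise (all terms
are nonnegative), the `n = 0` term gives `(log 2)^{k+1} / (k + 1)`, while for `n ≥ 1` the term
is, after `x = e^t`, the incomplete gamma integral
`∫_0^{log 2} t^k e^{-nt} dt = k!/n^{k+1} · (1 - 2^{-n} E_k(n log 2))`, where
`E_k(t) = ∑_{j ≤ k} t^j / j!` satisfies `(e^{-t} E_k(t))' = -e^{-t} t^k / k!`.
Summing over `n` produces `k! ζ(k+1)` and the values `Li_{k+1-j}(1/2)`, and the `j = k` term is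
absorbed into the `n = 0` term because `Li_1(1/2) = log 2`.
-/

open intervalIntegral Finset
open scoped Nat

noncomputable def expPartialSum (k : ℕ) (t : ℝ) : ℝ := ∑ j ∈ range (k + 1), t ^ j / j !

@[simp]
lemma expPartialSum_zero_right (k : ℕ) : expPartialSum k 0 = 1 := by
  simp [expPartialSum, sum_range_succ']

lemma expPartialSum_succ (k : ℕ) (t : ℝ) :
    expPartialSum (k + 1) t = expPartialSum k t + t ^ (k + 1) / (k + 1)! := by
  rw [expPartialSum, sum_range_succ, ← expPartialSum]

lemma hasDerivAt_exp_neg_mul_expPartialSum (k : ℕ) (t : ℝ) :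
    HasDerivAt (fun t => exp (-t) * expPartialSum k t) (-(exp (-t) * t ^ k / k !)) t := by
  induction k with
  | zero =>
    simpa [expPartialSum] using (hasDerivAt_neg t).exp
  | succ k ih =>
    simp only [expPartialSum_succ, mul_add]
    refine (ih.add ((hasDerivAt_neg t).exp.fun_mul
      ((hasDerivAt_pow (k + 1) t).div_const ((k + 1)! : ℝ)))).congr_deriv ?_
    push_cast [Nat.factorial_succ, add_tsub_cancel_right]
    field_simp
    ring

lemma exp_neg_nat_mul_log {x : ℝ} (hx : 0 < x) (n : ℕ) : exp (-(n * log x)) = (x ^ n)⁻¹ := by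
  rw [exp_neg, exp_nat_mul, exp_log hx]

lemma pos_of_mem_uIcc_one {b x : ℝ} (hb : 0 < b) (hx : x ∈ Set.uIcc 1 b) : 0 < x :=
  (lt_min one_pos hb).trans_le hx.1

lemma intervalIntegrable_log_pow_div_pow {b : ℝ} (hb : 0 < b) (k m : ℕ) :
    IntervalIntegrable (fun x => log x ^ k / x ^ m) volume 1 b := by
  have hpos : ∀ x ∈ Set.uIcc 1 b, 0 < x := fun _ => pos_of_mem_uIcc_one hb
  exact ContinuousOn.intervalIntegrable fun x hx =>
    ((continuousAt_log (hpos x hx).ne').pow k |>.div (continuousAt_pow _ _)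
      (pow_ne_zero _ (hpos x hx).ne')).continuousWithinAt

lemma integral_log_pow_div_pow_succ {b : ℝ} (hb : 0 < b) (k : ℕ) {n : ℕ} (hn : n ≠ 0) :
    ∫ x in (1 : ℝ)..b, log x ^ k / x ^ (n + 1)
      = k ! / n ^ (k + 1) * (1 - expPartialSum k (n * log b) / b ^ n) := by
  have hpos : ∀ x ∈ Set.uIcc 1 b, 0 < x := fun _ => pos_of_mem_uIcc_one hb
  have hderiv : ∀ x ∈ Set.uIcc 1 b, HasDerivAt
      (fun x => -(k ! / n ^ (k + 1) * (exp (-(n * log x)) * expPartialSum k (n * log x))))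
      (log x ^ k / x ^ (n + 1)) x := by
    intro x hx
    have hx := hpos x hx
    refine (((hasDerivAt_exp_neg_mul_expPartialSum k _).comp x
      ((hasDerivAt_log hx.ne').const_mul (n : ℝ))).const_mul _).neg.congr_deriv ?_
    rw [exp_neg_nat_mul_log hx]
    field_simp
    ring
  rw [integral_eq_sub_of_hasDerivAt hderiv (intervalIntegrable_log_pow_div_pow hb k (n + 1)),
    exp_neg_nat_mul_log hb]
  simp only [log_one, mul_zero, neg_zero, exp_zero, expPartialSum_zero_right, mul_one,
    sub_neg_eq_add]
  ring

lemma integral_log_pow_div_self {b : ℝ} (hb : 0 < b) (k : ℕ) :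
    ∫ x in (1 : ℝ)..b, log x ^ k / x = log b ^ (k + 1) / (k + 1) := by
  have hpos : ∀ x ∈ Set.uIcc 1 b, 0 < x := fun _ => pos_of_mem_uIcc_one hb
  have := integral_comp_mul_deriv (fun x hx => hasDerivAt_log (hpos x hx).ne')
    (continuousOn_inv₀.mono fun x hx => (hpos x hx).ne') (continuous_pow k)
  simpa [div_eq_mul_inv] using this

lemma hasSum_inv_pow_succ {x : ℝ} (hx : 1 < x) :
    HasSum (fun n : ℕ => (x ^ (n + 1))⁻¹) (x - 1)⁻¹ := by
  have h := (hasSum_geometric_of_lt_one (by positivity) (inv_lt_one_of_one_lt₀ hx)).mul_left x⁻¹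
  have hsum : x⁻¹ * (1 - x⁻¹)⁻¹ = (x - 1)⁻¹ := by
    rw [← mul_inv, mul_sub, mul_one, mul_inv_cancel₀ (by positivity)]
  have hterm : (fun n : ℕ => x⁻¹ * x⁻¹ ^ n) = fun n => (x ^ (n + 1))⁻¹ := by
    ext n
    rw [pow_succ', mul_inv, inv_pow]
  rwa [hsum, hterm] at h

lemma hasSum_polylog {x : ℝ} (hx : |x| < 1) (m : ℕ) :
    HasSum (fun n : ℕ => x ^ (n + 1) / ((n : ℝ) + 1) ^ m) (polylog m x) := by
  refine Summable.hasSum (.of_norm_bounded (g := fun n : ℕ => |x| ^ (n + 1)) ?_ fun n => ?_)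
  · exact (summable_nat_add_iff 1).2 (summable_geometric_of_lt_one (abs_nonneg x) hx)
  · rw [norm_div, norm_pow, norm_pow, Real.norm_eq_abs, Real.norm_of_nonneg (by positivity)]
    exact div_le_self (by positivity) (one_le_pow₀ (by simp))

lemma polylog_one {x : ℝ} (hx : |x| < 1) : polylog 1 x = -log (1 - x) :=
  ((hasSum_pow_div_log_of_abs_lt_one hx).unique (by simpa using hasSum_polylog hx 1)).symm

lemma integral_eq_of_hasSum_integral_of_nonneg {α : Type*} [MeasurableSpace α] {μ : Measure α}
    {f : ℕ → α → ℝ} {F : α → ℝ} {S : ℝ} (hf_int : ∀ n, Integrable (f n) μ)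
    (hf_nonneg : ∀ n, 0 ≤ᵐ[μ] f n) (hF : ∀ᵐ a ∂μ, HasSum (fun n => f n a) (F a))
    (hS : HasSum (fun n => ∫ a, f n a ∂μ) S) :
    ∫ a, F a ∂μ = S := by
  have hnorm : ∀ n, ∫ a, ‖f n a‖ ∂μ = ∫ a, f n a ∂μ := fun n =>
    integral_congr_ae ((hf_nonneg n).mono fun a ha => Real.norm_of_nonneg ha)
  have := hasSum_integral_of_summable_integral_norm hf_int (by simpa only [hnorm] using hS.summable)
  rw [hS.unique this]
  exact integral_congr_ae (hF.mono fun a ha => ha.tsum_eq.symm)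

lemma hasSum_integral_log_pow_div_pow_succ {k : ℕ} (hk : 1 ≤ k) {b : ℝ} (hb : 1 < b) :
    HasSum (fun n : ℕ => ∫ x in (1 : ℝ)..b, log x ^ k / x ^ (n + 1))
      (log b ^ (k + 1) / (k + 1) + (k ! * ∑' n : ℕ, 1 / ((n : ℝ) + 1) ^ (k + 1)
        - k ! * ∑ j ∈ range (k + 1), log b ^ j / j ! * polylog (k + 1 - j) b⁻¹)) := by
  have hb0 : 0 < b := one_pos.trans hb
  have hzeta : Summable fun n : ℕ => 1 / ((n : ℝ) + 1) ^ (k + 1) := by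
    simpa using (summable_nat_add_iff 1).2 (Real.summable_one_div_nat_pow.2 (by omega))
  have hbinv : |b⁻¹| < 1 := by
    rw [abs_inv, abs_of_pos hb0]
    exact inv_lt_one_of_one_lt₀ hb
  have hpolylog : ∀ j ∈ range (k + 1), HasSum
      (fun n : ℕ => log b ^ j / j ! * (b⁻¹ ^ (n + 1) / ((n : ℝ) + 1) ^ (k + 1 - j)))
      (log b ^ j / j ! * polylog (k + 1 - j) b⁻¹) :=
    fun j _ => (hasSum_polylog hbinv _).mul_left _
  have hzero : ∫ x in (1 : ℝ)..b, log x ^ k / x ^ (0 + 1) = log b ^ (k + 1) / (k + 1) := by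
    simpa using integral_log_pow_div_self hb0 k
  rw [← hzero]
  refine HasSum.zero_add ?_
  have hterm : ∀ n : ℕ, ∫ x in (1 : ℝ)..b, log x ^ k / x ^ (n + 1 + 1)
      = k ! * (1 / ((n : ℝ) + 1) ^ (k + 1))
        - k ! * ∑ j ∈ range (k + 1),
          log b ^ j / j ! * (b⁻¹ ^ (n + 1) / ((n : ℝ) + 1) ^ (k + 1 - j)) := by
    intro n
    rw [integral_log_pow_div_pow_succ hb0 k (n.add_one_ne_zero), expPartialSum, mul_sub, mul_one,
      sum_div, mul_sum, mul_sum]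
    push_cast
    congr 1
    · ring
    refine sum_congr rfl fun j hj => ?_
    rw [← pow_sub_mul_pow ((n : ℝ) + 1) (mem_range.1 hj).le, mul_pow, inv_pow]
    field_simp
  simpa only [hterm] using
    (hzeta.hasSum.mul_left (k ! : ℝ)).sub ((hasSum_sum hpolylog).mul_left (k ! : ℝ))

lemma integral_log_pow_div_sub_one {k : ℕ} (hk : 1 ≤ k) {b : ℝ} (hb : 1 < b) :
    ∫ x in Set.Ioo 1 b, log x ^ k / (x - 1)
      = log b ^ (k + 1) / (k + 1) + (k ! * ∑' n : ℕ, 1 / ((n : ℝ) + 1) ^ (k + 1)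
        - k ! * ∑ j ∈ range (k + 1), log b ^ j / j ! * polylog (k + 1 - j) b⁻¹) := by
  have hIoo : ∀ f : ℝ → ℝ, ∫ x in (1 : ℝ)..b, f x = ∫ x in Set.Ioo 1 b, f x := fun f => by
    rw [integral_of_le hb.le, integral_Ioc_eq_integral_Ioo]
  refine integral_eq_of_hasSum_integral_of_nonneg (fun n => ?_) (fun n => ?_) ?_
    (by simpa only [hIoo] using hasSum_integral_log_pow_div_pow_succ hk hb)
  · exact (intervalIntegrable_log_pow_div_pow (one_pos.trans hb) k (n + 1)).1.mono_set
      Set.Ioo_subset_Ioc_self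
  · filter_upwards [ae_restrict_mem measurableSet_Ioo] with x hx
    exact div_nonneg (pow_nonneg (log_nonneg hx.1.le) k) (pow_nonneg (one_pos.trans hx.1).le _)
  · filter_upwards [ae_restrict_mem measurableSet_Ioo] with x hx
    simpa only [div_eq_mul_inv] using (hasSum_inv_pow_succ hx.1).mul_left (log x ^ k)

theorem nielsen_ramanujan (k : ℕ) (hk : 1 ≤ k) :
    ∫ x in Set.Ioo (1 : ℝ) 2, (Real.log x) ^ k / (x - 1)
      = (k.factorial : ℝ) * (∑' n : ℕ, (1 : ℝ) / (n + 1) ^ (k + 1))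
        - ((k : ℝ) / (k + 1)) * (Real.log 2) ^ (k + 1)
        - (k.factorial : ℝ) *
            ∑ j ∈ Finset.range k,
              (Real.log 2) ^ j / (j.factorial : ℝ) * polylog (k + 1 - j) (1 / 2) := by
  have hLi₁ : polylog 1 2⁻¹ = log 2 := by
    rw [polylog_one (by norm_num), show (1 : ℝ) - 2⁻¹ = 2⁻¹ by norm_num, log_inv, neg_neg]
  rw [integral_log_pow_div_sub_one hk one_lt_two, sum_range_succ, add_tsub_cancel_left, hLi₁,
    one_div]
  field_simp
  ring
end
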